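/- Let J, R, κ be real n×n matrices with J skew-symmetric, κ symmetric positive definite, and R positive definite in the sense that vᵀRv > 0 for every nonzero v. Then A := (J − R)κ is Hurwitz: every complex eigenvalue μ of A (i.e., every μ ∈ ℂ for which there is a nonzero v ∈ ℂⁿ with the complexification of A sending v to μv) satisfies Re(μ) < 0. -/

import Mathlib

/-!
Put `w := κ v`. The eigen-equation gives `(J - R) w = μ v`, hence
`w* (J - R) w = μ (w* v) = μ (v* κ v)`, and `v* κ v` is real and positive since `κ` is
symmetric positive definite. On the other side, skew-symmetry of `J` kills its contribution to
the real part, so `Re (w* (J - R) w) = -(Re w ⬝ R Re w + Im w ⬝ R Im w) < 0`. Hence `Re μ < 0`.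
-/

open Matrix

namespace Matrix

variable {ι : Type*}

theorem isHermitian_map_ofReal {M : Matrix ι ι ℝ} (hM : Mᵀ = M) :
    (M.map Complex.ofReal).IsHermitian :=
  (isHermitian_iff_isSymm.mpr hM).map _ fun x => by
    rw [star_trivial, Complex.star_def, Complex.conj_ofReal]

variable [Fintype ι]

theorem re_star_dotProduct_map_ofReal_mulVec (M : Matrix ι ι ℝ) (w : ι → ℂ) :
    (star w ⬝ᵥ M.map Complex.ofReal *ᵥ w).re =
      (fun i => (w i).re) ⬝ᵥ M *ᵥ (fun i => (w i).re) +
        (fun i => (w i).im) ⬝ᵥ M *ᵥ (fun i => (w i).im) := by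
  simp only [dotProduct, mulVec, Pi.star_apply, map_apply, Finset.mul_sum, Complex.re_sum,
    ← Finset.sum_add_distrib]
  refine Finset.sum_congr rfl fun i _ => Finset.sum_congr rfl fun j _ => ?_
  simp only [Complex.mul_re, Complex.mul_im, Complex.star_def, Complex.conj_re,
    Complex.conj_im, Complex.ofReal_re, Complex.ofReal_im]
  ring

theorem dotProduct_mulVec_self_eq_zero_of_transpose_eq_neg {J : Matrix ι ι ℝ} (hJ : Jᵀ = -J)
    (x : ι → ℝ) : x ⬝ᵥ J *ᵥ x = 0 := by
  have h : x ⬝ᵥ J *ᵥ x = -(x ⬝ᵥ J *ᵥ x) := by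
    conv_lhs => rw [dotProduct_mulVec, ← mulVec_transpose, hJ, dotProduct_comm]
    rw [neg_mulVec, dotProduct_neg]
  linarith

theorem re_star_dotProduct_map_ofReal_mulVec_eq_zero {J : Matrix ι ι ℝ} (hJ : Jᵀ = -J)
    (w : ι → ℂ) : (star w ⬝ᵥ J.map Complex.ofReal *ᵥ w).re = 0 := by
  simp only [re_star_dotProduct_map_ofReal_mulVec,
    dotProduct_mulVec_self_eq_zero_of_transpose_eq_neg hJ, add_zero]

theorem re_star_dotProduct_map_ofReal_mulVec_pos {M : Matrix ι ι ℝ}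
    (hM : ∀ x : ι → ℝ, x ≠ 0 → 0 < x ⬝ᵥ M *ᵥ x) {w : ι → ℂ} (hw : w ≠ 0) :
    0 < (star w ⬝ᵥ M.map Complex.ofReal *ᵥ w).re := by
  rw [re_star_dotProduct_map_ofReal_mulVec]
  have hM_nonneg : ∀ x : ι → ℝ, 0 ≤ x ⬝ᵥ M *ᵥ x := fun x => by
    rcases eq_or_ne x 0 with rfl | hx
    · simp
    · exact (hM x hx).le
  by_cases hre : (fun i => (w i).re) = 0
  · have him : (fun i => (w i).im) ≠ 0 := fun him =>
      hw <| funext fun i => Complex.ext (congrFun hre i) (congrFun him i)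
    exact add_pos_of_nonneg_of_pos (hM_nonneg _) (hM _ him)
  · exact add_pos_of_pos_of_nonneg (hM _ hre) (hM_nonneg _)

theorem re_star_dotProduct_map_ofReal_sub_mulVec_neg {J R : Matrix ι ι ℝ} (hJ : Jᵀ = -J)
    (hR : ∀ x : ι → ℝ, x ≠ 0 → 0 < x ⬝ᵥ R *ᵥ x) {w : ι → ℂ} (hw : w ≠ 0) :
    (star w ⬝ᵥ (J - R).map Complex.ofReal *ᵥ w).re < 0 := by
  rw [Matrix.map_sub _ Complex.ofReal_sub, sub_mulVec, dotProduct_sub, Complex.sub_re,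
    re_star_dotProduct_map_ofReal_mulVec_eq_zero hJ, zero_sub, neg_lt_zero]
  exact re_star_dotProduct_map_ofReal_mulVec_pos hR hw

end Matrix

/-- With `J` skew-symmetric, `κ` symmetric positive definite, and `R` positive definite,
the matrix `A := (J - R) κ` is Hurwitz: every complex eigenvalue of `A` has negative real
part. -/
theorem hurwitz_of_port_hamiltonian_jacobian {n : ℕ}
    (J R κ : Matrix (Fin n) (Fin n) ℝ)
    (hJ : Jᵀ = -J)
    (hκsymm : κᵀ = κ)
    (hκpd : ∀ v : Fin n → ℝ, v ≠ 0 → 0 < v ⬝ᵥ κ.mulVec v)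
    (hR : ∀ v : Fin n → ℝ, v ≠ 0 → 0 < v ⬝ᵥ R.mulVec v)
    (A : Matrix (Fin n) (Fin n) ℝ) (hA : A = (J - R) * κ)
    (μ : ℂ) (v : Fin n → ℂ) (hv : v ≠ 0)
    (heig : (A.map (Complex.ofReal)).mulVec v = μ • v) :
    μ.re < 0 := by
  set K := κ.map Complex.ofReal
  set c := star v ⬝ᵥ K *ᵥ v
  have hc_re : 0 < c.re := re_star_dotProduct_map_ofReal_mulVec_pos hκpd hv
  have hc_im : c.im = 0 := (isHermitian_map_ofReal hκsymm).im_star_dotProduct_mulVec_self v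
  have hKv : K *ᵥ v ≠ 0 := fun h => by simp [c, h] at hc_re
  have hKv_v : star (K *ᵥ v) ⬝ᵥ v = c := by
    rw [star_mulVec, (isHermitian_map_ofReal hκsymm).eq, ← dotProduct_mulVec]
  have hA_map : A.map Complex.ofReal = (J - R).map Complex.ofReal * K := by
    rw [hA]; exact Matrix.map_mul (f := Complex.ofRealHom)
  have hquad : star (K *ᵥ v) ⬝ᵥ (J - R).map Complex.ofReal *ᵥ (K *ᵥ v) = μ * c := by
    rw [mulVec_mulVec, ← hA_map, heig, dotProduct_smul, hKv_v, smul_eq_mul]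
  have hneg := re_star_dotProduct_map_ofReal_sub_mulVec_neg hJ hR hKv
  rw [hquad, Complex.mul_re, hc_im, mul_zero, sub_zero] at hneg
  exact neg_of_mul_neg_left hneg hc_re.le
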